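/- Let r ∈ ℝ² be such that the inverse Lozi map f⁻¹ (with 1 < a ≤ 2, -1 < b < 0, a+b > 1) is differentiable at all points f⁻ⁿ(r), n ≥ 0. Then there exists a one-dimensional subspace E^u_r of ℝ² such that ‖Dfⁿ(v)‖ ≥ βⁿ‖v‖ for all v ∈ Df⁻ⁿ(E^u_r), and Df⁻¹_r(E^u_r) = E^u_{f⁻¹(r)}, where β = (a+√(a²+4b))/2 > 1. -/

import Mathlib

/-!
Differentiability of `f⁻¹` at `p` forces `p.2 ≠ 0`, so `f` is differentiable at `f⁻¹ p` with
derivative `(u, v) ↦ (v - a s u, b u)`, `s = ±1`. Each of these maps sends the cone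
`|v| ≤ (a - β) |u|` into itself and expands the sup norm on it by `β`, because `β² = a β + b`.
Pulling the cone back along `Df⁻ⁿ` gives a nested sequence of closed cones, so by compactness of
the unit sphere some unit vector `e` lies in all of them; the lines spanned by `Df⁻ⁿ e` are the
unstable directions.
-/

/-- The Lozi map. -/
noncomputable def lozi (a b : ℝ) : ℝ × ℝ → ℝ × ℝ :=
  fun p => (1 + p.2 - a * |p.1|, b * p.1)

/-- The inverse of the Lozi map. -/
noncomputable def loziInv (a b : ℝ) : ℝ × ℝ → ℝ × ℝ :=
  fun p => (p.2 / b, p.1 - 1 + a * |p.2 / b|)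

open Set

section Cocycle

variable {𝕜 E : Type*} [NontriviallyNormedField 𝕜] [NormedAddCommGroup E] [NormedSpace 𝕜 E]

/-- If `A n` is the derivative of `f` at `x (n + 1)`, where `f (x (n + 1)) = x n`, then
`backwardProd A n` is the derivative of `f⁻ⁿ` at `x 0`. -/
def backwardProd (A : ℕ → E ≃L[𝕜] E) : ℕ → E ≃L[𝕜] E
  | 0 => ContinuousLinearEquiv.refl 𝕜 E
  | n + 1 => (backwardProd A n).trans (A n).symm

theorem apply_backwardProd_succ (A : ℕ → E ≃L[𝕜] E) (n : ℕ) (v : E) :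
    A n (backwardProd A (n + 1) v) = backwardProd A n v :=
  (A n).apply_symm_apply _

theorem hasFDerivAt_iterate_of_backward_orbit {f : E → E} {x : ℕ → E} {A : ℕ → E ≃L[𝕜] E}
    (hx : ∀ n, f (x (n + 1)) = x n) (hA : ∀ n, HasFDerivAt f (A n : E →L[𝕜] E) (x (n + 1)))
    (n : ℕ) : HasFDerivAt f^[n] ((backwardProd A n).symm : E →L[𝕜] E) (x n) := by
  induction n with
  | zero => exact hasFDerivAt_id _
  | succ n ih =>
    rw [Function.iterate_succ]
    exact (hx n ▸ ih).comp (x (n + 1)) (hA n)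

end Cocycle

section Cone

variable {E : Type*} [NormedAddCommGroup E] [NormedSpace ℝ E]
  {C : Set E} {A : ℕ → E ≃L[ℝ] E}

theorem exists_norm_eq_one_forall_backwardProd_mem [ProperSpace E] (hC : IsClosed C)
    (hC_smul : ∀ (c : ℝ) (v : E), v ∈ C → c • v ∈ C) (hC_ne : ∃ v ∈ C, v ≠ 0)
    (hA : ∀ n, MapsTo (A n) C C) : ∃ e : E, ‖e‖ = 1 ∧ ∀ n, backwardProd A n e ∈ C := by
  set U : ℕ → Set E := fun n => Metric.sphere 0 1 ∩ backwardProd A n ⁻¹' C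
  have hU_anti : ∀ n, U (n + 1) ⊆ U n := fun n v ⟨hv, hvC⟩ =>
    ⟨hv, by simpa only [mem_preimage, apply_backwardProd_succ] using hA n hvC⟩
  have hU_ne : ∀ n, (U n).Nonempty := by
    obtain ⟨v, hvC, hv0⟩ := hC_ne
    intro n
    set w := (backwardProd A n).symm v
    have hw0 : w ≠ 0 := by simpa [w] using hv0
    refine ⟨‖w‖⁻¹ • w, ?_, ?_⟩
    · simp [norm_smul, hw0]
    · simpa [w] using hC_smul _ _ hvC
  have hU_closed : ∀ n, IsClosed (U n) := fun n =>
    Metric.isClosed_sphere.inter (hC.preimage (backwardProd A n).continuous)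
  obtain ⟨e, he⟩ := IsCompact.nonempty_iInter_of_sequence_nonempty_isCompact_isClosed U hU_anti
    hU_ne ((isCompact_sphere 0 1).inter_right (hC.preimage (backwardProd A 0).continuous)) hU_closed
  rw [mem_iInter] at he
  exact ⟨e, by simpa using (he 0).1, fun n => (he n).2⟩

theorem pow_mul_norm_backwardProd_le {β : ℝ} (hβ : 0 ≤ β)
    (hA : ∀ n, ∀ w ∈ C, β * ‖w‖ ≤ ‖A n w‖) {e : E} (he : ∀ n, backwardProd A n e ∈ C) (n : ℕ) :
    β ^ n * ‖backwardProd A n e‖ ≤ ‖e‖ := by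
  induction n with
  | zero => simp [backwardProd]
  | succ n ih =>
    calc β ^ (n + 1) * ‖backwardProd A (n + 1) e‖
        = β ^ n * (β * ‖backwardProd A (n + 1) e‖) := by ring
      _ ≤ β ^ n * ‖backwardProd A n e‖ := by
        rw [← apply_backwardProd_succ A n e]
        exact mul_le_mul_of_nonneg_left (hA n _ (he (n + 1))) (by positivity)
      _ ≤ ‖e‖ := ih

theorem exists_expanding_lines [ProperSpace E] (hC : IsClosed C)
    (hC_smul : ∀ (c : ℝ) (v : E), v ∈ C → c • v ∈ C) (hC_ne : ∃ v ∈ C, v ≠ 0)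
    (hA : ∀ n, MapsTo (A n) C C) {β : ℝ} (hβ : 0 ≤ β)
    (hA_exp : ∀ n, ∀ w ∈ C, β * ‖w‖ ≤ ‖A n w‖) :
    ∃ F : ℕ → Submodule ℝ E, (∀ n, Module.finrank ℝ (F n) = 1) ∧
      (∀ n, (F n).map ((A n).symm : E →L[ℝ] E).toLinearMap = F (n + 1)) ∧
      ∀ n, ∀ v ∈ F n, β ^ n * ‖v‖ ≤ ‖(backwardProd A n).symm v‖ := by
  obtain ⟨e, he1, heC⟩ := exists_norm_eq_one_forall_backwardProd_mem hC hC_smul hC_ne hA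
  have he0 : ∀ n, backwardProd A n e ≠ 0 := fun n => by
    simpa using ne_zero_of_norm_ne_zero (he1.trans_ne one_ne_zero)
  refine ⟨fun n => ℝ ∙ backwardProd A n e, fun n => finrank_span_singleton (he0 n),
    fun n => ?_, fun n v hv => ?_⟩
  · rw [Submodule.map_span, image_singleton]
    rfl
  · obtain ⟨c, rfl⟩ := Submodule.mem_span_singleton.1 hv
    calc β ^ n * ‖c • backwardProd A n e‖ = ‖c‖ * (β ^ n * ‖backwardProd A n e‖) := by
          rw [norm_smul]; ring
      _ ≤ ‖c‖ * ‖e‖ := by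
          gcongr
          exact pow_mul_norm_backwardProd_le hβ hA_exp heC n
      _ = ‖(backwardProd A n).symm (c • backwardProd A n e)‖ := by simp [norm_smul]

end Cone

section Lozi

noncomputable def loziDeriv (a : ℝ) {b : ℝ} (hb : b ≠ 0) (s : ℝ) : (ℝ × ℝ) ≃L[ℝ] (ℝ × ℝ) :=
  LinearEquiv.toContinuousLinearEquiv
    { toFun := fun v => (v.2 - a * s * v.1, b * v.1)
      invFun := fun w => (w.2 / b, w.1 + a * s * (w.2 / b))
      map_add' := fun v w => by ext <;> (simp only [Prod.fst_add, Prod.snd_add]; ring)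
      map_smul' := fun c v => by
        ext <;> (simp only [Prod.smul_fst, Prod.smul_snd, smul_eq_mul, RingHom.id_apply]; ring)
      left_inv := fun v => by ext <;> simp [hb]
      right_inv := fun w => by ext <;> simp [mul_div_cancel₀ _ hb] }

variable {a b : ℝ}

theorem loziDeriv_apply (hb : b ≠ 0) (s : ℝ) (v : ℝ × ℝ) :
    loziDeriv a hb s v = (v.2 - a * s * v.1, b * v.1) := rfl

theorem lozi_loziInv (hb : b ≠ 0) (p : ℝ × ℝ) : lozi a b (loziInv a b p) = p := by
  ext
  · simp only [lozi, loziInv]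
    ring
  · exact mul_div_cancel₀ _ hb

theorem hasFDerivAt_lozi (hb : b ≠ 0) {p : ℝ × ℝ} (hp : p.1 ≠ 0) :
    HasFDerivAt (lozi a b) (loziDeriv a hb (SignType.sign p.1) : (ℝ × ℝ) →L[ℝ] ℝ × ℝ) p := by
  have h : HasFDerivAt (lozi a b) _ p :=
    (((hasFDerivAt_const (1 : ℝ) p).add hasFDerivAt_snd).sub
      ((hasFDerivAt_fst.abs hp).const_mul a)).prodMk (hasFDerivAt_fst.const_mul b)
  refine h.congr_fderiv ?_
  ext <;> simp [loziDeriv_apply]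

theorem hasFDerivAt_loziInv (hb : b ≠ 0) {p : ℝ × ℝ} (hp : p.2 ≠ 0) :
    HasFDerivAt (loziInv a b)
      ((loziDeriv a hb (SignType.sign (loziInv a b p).1)).symm : (ℝ × ℝ) →L[ℝ] ℝ × ℝ) p :=
  HasFDerivAt.of_local_left_inverse (by unfold loziInv; fun_prop)
    (hasFDerivAt_lozi hb (div_ne_zero hp hb)) (Filter.Eventually.of_forall (lozi_loziInv hb))

theorem abs_sign_fst_loziInv (hb : b ≠ 0) {p : ℝ × ℝ} (hp : p.2 ≠ 0) :
    |(SignType.sign (loziInv a b p).1 : ℝ)| = 1 := by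
  rcases (div_ne_zero hp hb).lt_or_gt with h | h <;> simp [loziInv, h]

theorem snd_ne_zero_of_differentiableAt_loziInv (ha : a ≠ 0) (hb : b ≠ 0) {p : ℝ × ℝ}
    (h : DifferentiableAt ℝ (loziInv a b) p) : p.2 ≠ 0 := by
  intro hp0
  -- on the vertical line through `p`, `|·|` is an affine function of `loziInv a b`
  have hline : DifferentiableAt ℝ (fun t : ℝ => (p.1, b * t)) 0 := by fun_prop
  have habs : DifferentiableAt ℝ
      (fun t : ℝ => a⁻¹ * ((loziInv a b (p.1, b * t)).2 - p.1 + 1)) 0 := by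
    have hp : (p.1, b * 0) = p := by ext <;> simp [hp0]
    exact ((hp ▸ h).comp 0 hline).snd.sub_const _ |>.add_const _ |>.const_mul _
  refine not_differentiableAt_abs_zero (habs.congr_of_eventuallyEq
    (Filter.Eventually.of_forall fun t => ?_))
  simp only [loziInv]
  field_simp
  ring

end Lozi

section UnstableCone

def unstableCone (α : ℝ) : Set (ℝ × ℝ) := {v | |v.2| ≤ α * |v.1|}

theorem isClosed_unstableCone (α : ℝ) : IsClosed (unstableCone α) :=
  isClosed_le (by fun_prop) (by fun_prop)

theorem smul_mem_unstableCone {α : ℝ} (c : ℝ) {v : ℝ × ℝ} (hv : v ∈ unstableCone α) :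
    c • v ∈ unstableCone α := by
  simp only [unstableCone, mem_ofPred_eq, Prod.smul_fst, Prod.smul_snd, smul_eq_mul, abs_mul]
  nlinarith [abs_nonneg c, hv.out]

variable {a b β s : ℝ} (hb : b ≠ 0) (hs : |s| = 1)
include hb hs

theorem mul_abs_fst_le_abs_fst_loziDeriv (ha : 0 ≤ a) {w : ℝ × ℝ}
    (hw : w ∈ unstableCone (a - β)) : β * |w.1| ≤ |(loziDeriv a hb s w).1| := by
  have h : |a * s * w.1| = a * |w.1| := by rw [abs_mul, abs_mul, hs, abs_of_nonneg ha, mul_one]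
  calc β * |w.1| ≤ |a * s * w.1| - |w.2| := by rw [h]; linarith [hw.out]
    _ ≤ |(loziDeriv a hb s w).1| := by
      rw [loziDeriv_apply, abs_sub_comm]; exact abs_sub_abs_le_abs_sub _ _

theorem loziDeriv_mapsTo_unstableCone (hβ_sq : β ^ 2 = a * β + b) (hβ : 0 ≤ β) (hβa : β ≤ a) :
    MapsTo (loziDeriv a hb s) (unstableCone (a - β)) (unstableCone (a - β)) := fun w hw => by
  have h := mul_abs_fst_le_abs_fst_loziDeriv hb hs (hβ.trans hβa) hw
  calc |(loziDeriv a hb s w).2| = (a - β) * (β * |w.1|) := by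
        rw [loziDeriv_apply, abs_mul, abs_of_nonpos (by nlinarith)]
        linear_combination |w.1| * hβ_sq
    _ ≤ (a - β) * |(loziDeriv a hb s w).1| := mul_le_mul_of_nonneg_left h (by linarith)

theorem mul_norm_le_norm_loziDeriv (hβ : 0 ≤ β) (hβa : β ≤ a) (hβa₁ : a - 1 ≤ β) {w : ℝ × ℝ}
    (hw : w ∈ unstableCone (a - β)) : β * ‖w‖ ≤ ‖loziDeriv a hb s w‖ := by
  have hnorm : ‖w‖ = |w.1| := by
    rw [Prod.norm_def, Real.norm_eq_abs, Real.norm_eq_abs, max_eq_left]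
    nlinarith [hw.out, abs_nonneg w.1]
  rw [hnorm]
  exact (mul_abs_fst_le_abs_fst_loziDeriv hb hs (hβ.trans hβa) hw).trans
    (norm_fst_le (loziDeriv a hb s w))

end UnstableCone

noncomputable def loziRate (a b : ℝ) : ℝ := (a + √(a ^ 2 + 4 * b)) / 2

theorem loziRate_sq {a b : ℝ} (hD : 0 ≤ a ^ 2 + 4 * b) :
    loziRate a b ^ 2 = a * loziRate a b + b := by
  unfold loziRate
  linear_combination Real.sq_sqrt hD / 4

theorem loziRate_mem_Icc {a b : ℝ} (hb : b < 0) (hab : 1 < a + b) :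
    loziRate a b ∈ Icc (a - 1) a := by
  have h_lo : |a - 2| ≤ √(a ^ 2 + 4 * b) := Real.abs_le_sqrt (by nlinarith)
  have h_hi : √(a ^ 2 + 4 * b) ≤ a := Real.sqrt_le_iff.2 ⟨by linarith, by nlinarith⟩
  constructor <;> unfold loziRate <;> linarith [le_abs_self (a - 2)]

theorem unstable_direction_exists_general (a b : ℝ)
    (hb2 : b < 0) (hab : 1 < a + b)
    (r : ℝ × ℝ)
    (hdiff : ∀ n : ℕ, DifferentiableAt ℝ (loziInv a b) ((loziInv a b)^[n] r)) :
    ∃ E : ℕ → Submodule ℝ (ℝ × ℝ),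
      (∀ n, Module.finrank ℝ (E n) = 1) ∧
      (∀ n, Submodule.map
          (fderiv ℝ (loziInv a b) ((loziInv a b)^[n] r)).toLinearMap (E n) = E (n + 1)) ∧
      (∀ n : ℕ, ∀ v ∈ E n,
        ‖fderiv ℝ ((lozi a b)^[n]) ((loziInv a b)^[n] r) v‖ ≥
          ((a + Real.sqrt (a ^ 2 + 4 * b)) / 2) ^ n * ‖v‖) := by
  have hb : b ≠ 0 := hb2.ne
  obtain ⟨hβ_lo, hβ_hi⟩ := loziRate_mem_Icc hb2 hab
  have hβ : 0 ≤ loziRate a b := by linarith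
  have hβ_sq := loziRate_sq (a := a) (b := b) (by nlinarith [sq_nonneg (a - 2)])
  set q : ℕ → ℝ × ℝ := fun n => (loziInv a b)^[n] r
  have hq : ∀ n, (q n).2 ≠ 0 := fun n =>
    snd_ne_zero_of_differentiableAt_loziInv (by linarith) hb (hdiff n)
  have hq_succ : ∀ n, q (n + 1) = loziInv a b (q n) := fun n => Function.iterate_succ_apply' ..
  obtain ⟨E, hE_rank, hE_map, hE_exp⟩ := exists_expanding_lines (isClosed_unstableCone _)
    smul_mem_unstableCone ⟨(1, 0), by simpa [unstableCone] using hβ_hi, by simp⟩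
    (fun n => loziDeriv_mapsTo_unstableCone hb (abs_sign_fst_loziInv hb (hq n)) hβ_sq hβ hβ_hi) hβ
    (fun n _ hw => mul_norm_le_norm_loziDeriv hb (abs_sign_fst_loziInv hb (hq n)) hβ hβ_hi hβ_lo hw)
  refine ⟨E, hE_rank, fun n => ?_, fun n v hv => ?_⟩
  · rw [(hasFDerivAt_loziInv hb (hq n)).fderiv]
    exact hE_map n
  · have hx : ∀ n, lozi a b (q (n + 1)) = q n := fun n => by rw [hq_succ]; exact lozi_loziInv hb _
    have hA : ∀ n, HasFDerivAt (lozi a b)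
        (loziDeriv a hb (SignType.sign (loziInv a b (q n)).1) : (ℝ × ℝ) →L[ℝ] ℝ × ℝ)
        (q (n + 1)) := fun n => by
      rw [hq_succ]; exact hasFDerivAt_lozi (p := loziInv a b (q n)) hb (div_ne_zero (hq n) hb)
    rw [(hasFDerivAt_iterate_of_backward_orbit hx hA n).fderiv]
    exact hE_exp n v hv

/-- Existence of unstable directions: if f⁻¹ is differentiable along the
backward orbit of r, there are one-dimensional subspaces E^u (E n being the
subspace at f⁻ⁿ(r)) such that Dfⁿ expands vectors of Df⁻ⁿ(E^u_r) by βⁿ and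
Df⁻¹ maps E^u_{f⁻ⁿ(r)} to E^u_{f⁻ⁿ⁻¹(r)}. -/
theorem unstable_direction_exists (a b : ℝ) (ha1 : 1 < a) (ha2 : a ≤ 2)
    (hb1 : -1 < b) (hb2 : b < 0) (hab : 1 < a + b)
    (r : ℝ × ℝ)
    (hdiff : ∀ n : ℕ, DifferentiableAt ℝ (loziInv a b) ((loziInv a b)^[n] r)) :
    ∃ E : ℕ → Submodule ℝ (ℝ × ℝ),
      (∀ n, Module.finrank ℝ (E n) = 1) ∧
      (∀ n, Submodule.map
          (fderiv ℝ (loziInv a b) ((loziInv a b)^[n] r)).toLinearMap (E n) = E (n + 1)) ∧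
      (∀ n : ℕ, ∀ v ∈ E n,
        ‖fderiv ℝ ((lozi a b)^[n]) ((loziInv a b)^[n] r) v‖ ≥
          ((a + Real.sqrt (a ^ 2 + 4 * b)) / 2) ^ n * ‖v‖) :=
  unstable_direction_exists_general a b hb2 hab r hdiff
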